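/- arXiv:1207.3287 — 2 statements merged into one kernel-verified Lean document; each statement's English description precedes it below -/
import Mathlib

section
/- Let A be a commutative associative unital algebra over ℝ and let ⋆ be a star product on A with coefficient maps (P_k). Then the skew-symmetric bracket {f,g} := P₁(f,g) − P₁(g,f) satisfies the Jacobi identity: for all f, g, h ∈ A, {f,{g,h}} + {g,{h,f}} + {h,{f,g}} = 0. Consequently (A, ·, {·,·}) is a Poisson algebra. -/
/-!
At order `ħ²`, associativity says that the associator of `P₁` is the Hochschild coboundary
of `P₂`. Summing that identity with signs over the six permutations of `(f, g, h)`, the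
coboundary terms cancel because `A` is commutative, while the alternating sum of the
associators of `P₁` is exactly the Jacobiator of its commutator bracket.
-/

open Finset

variable {A : Type*} [CommRing A] [Algebra ℝ A]

/-- Order-by-order associativity of the star product with coefficients `P` (where `P 0` is
the product of `A`). -/
def StarAssoc (P : ℕ → A →ₗ[ℝ] A →ₗ[ℝ] A) : Prop :=
  ∀ n : ℕ, ∀ f g h : A,
    ∑ p ∈ antidiagonal n, P p.1 (P p.2 f g) h = ∑ p ∈ antidiagonal n, P p.1 f (P p.2 g h)

/-- Unitality of the star product: `f ⋆ 1 = 1 ⋆ f = f`, i.e. `P_k (f,1) = P_k (1,f) = 0`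
for `k ≥ 1`. -/
def StarUnital (P : ℕ → A →ₗ[ℝ] A →ₗ[ℝ] A) : Prop :=
  ∀ k : ℕ, 1 ≤ k → ∀ f : A, P k f 1 = 0 ∧ P k 1 f = 0

/-- The skew-symmetric bracket `{f,g} = P₁(f,g) − P₁(g,f)` induced by a star product. -/
def starBracket (P : ℕ → A →ₗ[ℝ] A →ₗ[ℝ] A) (f g : A) : A :=
  P 1 f g - P 1 g f

theorem StarAssoc.assoc_two {P : ℕ → A →ₗ[ℝ] A →ₗ[ℝ] A} (hP0 : ∀ f g : A, P 0 f g = f * g)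
    (hPa : StarAssoc P) (f g h : A) :
    P 2 f g * h + P 1 (P 1 f g) h + P 2 (f * g) h
      = f * P 2 g h + P 1 f (P 1 g h) + P 2 f (g * h) := by
  simpa [Nat.sum_antidiagonal_eq_sum_range_succ_mk, sum_range_succ, hP0] using hPa 2 f g h

theorem starBracket_jacobi_of_assoc_two (P : ℕ → A →ₗ[ℝ] A →ₗ[ℝ] A)
    (h2 : ∀ f g h : A, P 2 f g * h + P 1 (P 1 f g) h + P 2 (f * g) h
      = f * P 2 g h + P 1 f (P 1 g h) + P 2 f (g * h))
    (f g h : A) :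
    starBracket P f (starBracket P g h) + starBracket P g (starBracket P h f)
      + starBracket P h (starBracket P f g) = 0 := by
  have e₁ := h2 f g h
  have e₂ := h2 g h f
  have e₃ := h2 h f g
  have e₄ := h2 f h g
  have e₅ := h2 h g f
  have e₆ := h2 g f h
  simp only [starBracket, map_sub, LinearMap.sub_apply]
  -- `ring_nf` identifies `P 2 (f * g) h` with `P 2 (g * f) h` etc., so the `P 2` terms cancel.
  ring_nf at e₁ e₂ e₃ e₄ e₅ e₆ ⊢
  linear_combination e₄ + e₅ + e₆ - e₁ - e₂ - e₃

theorem starBracket_jacobi_general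
    (P : ℕ → A →ₗ[ℝ] A →ₗ[ℝ] A) (hP0 : ∀ f g : A, P 0 f g = f * g)
    (hPa : StarAssoc P) :
    ∀ f g h : A,
      starBracket P f (starBracket P g h) + starBracket P g (starBracket P h f)
        + starBracket P h (starBracket P f g) = 0 :=
  starBracket_jacobi_of_assoc_two P (hPa.assoc_two hP0)

/-- For a star product with coefficients `P`, the skew-symmetric bracket
`{f,g} = P₁(f,g) − P₁(g,f)` satisfies the Jacobi identity
`{f,{g,h}} + {g,{h,f}} + {h,{f,g}} = 0`; hence `(A, ·, {·,·})` is a Poisson algebra. -/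
theorem starBracket_jacobi
    (P : ℕ → A →ₗ[ℝ] A →ₗ[ℝ] A) (hP0 : ∀ f g : A, P 0 f g = f * g)
    (hPa : StarAssoc P) (hPu : StarUnital P) :
    ∀ f g h : A,
      starBracket P f (starBracket P g h) + starBracket P g (starBracket P h f)
        + starBracket P h (starBracket P f g) = 0 :=
  starBracket_jacobi_general P hP0 hPa
end

section
/- Let k be a commutative ring and A a k-module. For any n-cochain D, m-cochain E and p-cochain F, the Gerstenhaber bracket satisfies the graded Jacobi identity: [D,[E,F]_G]_G = [[D,E]_G,F]_G + (−1)^{(n−1)(m−1)} [E,[D,F]_G]_G. -/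
open Finset

variable {k : Type*} [CommRing k] {A : Type*} [AddCommGroup A] [Module k A]

/-- An `n`-cochain (a multilinear map `Aⁿ → A`) viewed as a function of an infinite
sequence of arguments, depending only on the first `n` of them. -/
def toCochain {n : ℕ} (D : MultilinearMap k (fun _ : Fin n => A) A) : (ℕ → A) → A :=
  fun a => D fun i => a i

/-- The Gerstenhaber product of an `n`-cochain `D` and an `m`-cochain `E`:
`(D∘E)(a₀,…,a_{n+m−2}) = ∑_{j=0}^{n−1} (−1)^{(m−1)j} D(a₀,…,a_{j−1}, E(a_j,…,a_{j+m−1}),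
a_{j+m},…,a_{n+m−2})`.  (The sign `(−1)^{(m−1)j}` is encoded as `(−1)^{(m+1)j}`, which has the
same parity for every `m ≥ 0`, including the degenerate case `m = 0`.) -/
def gcomp (n m : ℕ) (D E : (ℕ → A) → A) : (ℕ → A) → A :=
  fun a => ∑ j ∈ Finset.range n,
    ((-1 : ℤ) ^ ((m + 1) * j)) •
      D fun i => if i < j then a i else if i = j then E (fun l => a (j + l)) else a (i + m - 1)

/-- The Gerstenhaber bracket `[D,E]_G = D∘E − (−1)^{(n−1)(m−1)} E∘D` of an `n`-cochain and an
`m`-cochain (the sign is encoded with the same parity as `(−1)^{(n+1)(m+1)}`). -/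
def gbracket (n m : ℕ) (D E : (ℕ → A) → A) : (ℕ → A) → A :=
  gcomp n m D E - ((-1 : ℤ) ^ ((n + 1) * (m + 1))) • gcomp m n E D

set_option linter.unusedSectionVars false

/-! ### Sign helpers -/

private lemma eps_two (x c : ℕ) : (-1 : ℤ) ^ (x + 2 * c) = (-1 : ℤ) ^ x := by
  rw [pow_add, pow_mul, neg_one_sq, one_pow, mul_one]

private lemma neg_one_pow_cases (x : ℕ) : (-1 : ℤ) ^ x = 1 ∨ (-1 : ℤ) ^ x = -1 := by
  rcases Nat.even_or_odd x with h | h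
  · exact Or.inl h.neg_one_pow
  · exact Or.inr h.neg_one_pow

/-! ### Insertion operator -/

def insArg (j q : ℕ) (E : (ℕ → A) → A) (a : ℕ → A) : ℕ → A :=
  fun i => if i < j then a i else if i = j then E (fun l => a (j + l)) else a (i + q - 1)

lemma insArg_lt {j : ℕ} (q : ℕ) (E : (ℕ → A) → A) (a : ℕ → A) {i : ℕ} (h : i < j) :
    insArg j q E a i = a i := by simp only [insArg, if_pos h]

lemma insArg_self (j q : ℕ) (E : (ℕ → A) → A) (a : ℕ → A) :
    insArg j q E a j = E fun l => a (j + l) := by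
  simp [insArg]

lemma insArg_gt {j : ℕ} (q : ℕ) (E : (ℕ → A) → A) (a : ℕ → A) {i : ℕ} (h : j < i) :
    insArg j q E a i = a (i + q - 1) := by
  simp only [insArg]
  rw [if_neg (by omega), if_neg (by omega)]

lemma gcomp_apply (n m : ℕ) (D E : (ℕ → A) → A) (a : ℕ → A) :
    gcomp n m D E a = ∑ j ∈ range n, (-1 : ℤ) ^ ((m + 1) * j) • D (insArg j m E a) := rfl

lemma gcomp_zero_fst (r : ℕ) (G X : (ℕ → A) → A) (a : ℕ → A) : gcomp 0 r G X a = 0 := by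
  simp [gcomp_apply]

lemma gcomp_left_zero (q r : ℕ) {G : (ℕ → A) → A} (X : (ℕ → A) → A) (hG : ∀ b, G b = 0)
    (a : ℕ → A) : gcomp q r G X a = 0 := by simp [gcomp_apply, hG]

lemma toCochain_congr {n : ℕ} (D : MultilinearMap k (fun _ : Fin n => A) A) {b c : ℕ → A}
    (h : ∀ l, l < n → b l = c l) : toCochain D b = toCochain D c := by
  unfold toCochain; congr 1; funext i; exact h i i.2

private def slotHom {n : ℕ} (D : MultilinearMap k (fun _ : Fin n => A) A) {i : ℕ} (hi : i < n)
    (v : ℕ → A) : A →+ A where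
  toFun x := D (Function.update (fun w : Fin n => v w) ⟨i, hi⟩ x)
  map_zero' := D.map_update_zero _ _
  map_add' x y := D.map_update_add _ _ x y

private lemma toCochain_ite {n : ℕ} (D : MultilinearMap k (fun _ : Fin n => A) A) {i : ℕ}
    (hi : i < n) (v : ℕ → A) (x : A) :
    toCochain D (fun w => if w = i then x else v w) = slotHom D hi v x := by
  show D _ = D _
  congr 1
  funext w
  by_cases h : w = (⟨i, hi⟩ : Fin n)
  · subst h; simp [Function.update]
  · have h' : (w : ℕ) ≠ i := fun hc => h (Fin.ext hc)
    rw [Function.update_of_ne h]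
    exact if_neg h'

private lemma toCochain_self {n : ℕ} (D : MultilinearMap k (fun _ : Fin n => A) A) {i : ℕ}
    (hi : i < n) (v : ℕ → A) : toCochain D v = slotHom D hi v (v i) := by
  rw [← toCochain_ite D hi v (v i)]
  exact toCochain_congr D fun l _ => by by_cases h : l = i <;> simp [h]

lemma toCochain_slot_sum {n : ℕ} (D : MultilinearMap k (fun _ : Fin n => A) A) {i : ℕ}
    (hi : i < n) (v : ℕ → A) {ι : Type*} (s : Finset ι) (c : ι → ℤ) (e : ι → A)
    (hv : v i = ∑ t ∈ s, c t • e t) :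
    toCochain D v = ∑ t ∈ s, c t • toCochain D fun w => if w = i then e t else v w := by
  rw [toCochain_self D hi v, hv, map_sum]
  exact Finset.sum_congr rfl fun t _ => by
    rw [map_zsmul, toCochain_ite D hi v (e t)]

lemma toCochain_slot_zero {n : ℕ} (D : MultilinearMap k (fun _ : Fin n => A) A) {i : ℕ}
    (hi : i < n) {v : ℕ → A} (hv : v i = 0) : toCochain D v = 0 := by
  rw [toCochain_self D hi v, hv, map_zero]

lemma gcomp_right_zero (n q : ℕ) (D : MultilinearMap k (fun _ : Fin n => A) A)
    {Z : (ℕ → A) → A} (hZ : ∀ b, Z b = 0) (a : ℕ → A) :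
    gcomp n q (toCochain D) Z a = 0 := by
  rw [gcomp_apply]
  refine Finset.sum_eq_zero fun j hj => ?_
  rw [toCochain_slot_zero D (mem_range.mp hj) (by rw [insArg_self, hZ]), smul_zero]

private lemma toCochain_insArg {n : ℕ} (D : MultilinearMap k (fun _ : Fin n => A) A) {j : ℕ}
    (hj : j < n) (q : ℕ) (Z X : (ℕ → A) → A) (a : ℕ → A) :
    toCochain D (insArg j q Z a)
      = slotHom D hj (insArg j q X a) (Z fun l => a (j + l)) := by
  rw [← toCochain_ite D hj (insArg j q X a)]
  apply toCochain_congr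
  intro w _
  rcases lt_trichotomy w j with h | h | h
  · rw [insArg_lt _ _ _ h, if_neg (by omega), insArg_lt _ _ _ h]
  · subst h; rw [insArg_self, if_pos rfl]
  · rw [insArg_gt _ _ _ h, if_neg (by omega), insArg_gt _ _ _ h]

lemma gcomp_right_sub (n q : ℕ) (D : MultilinearMap k (fun _ : Fin n => A) A)
    (X Y : (ℕ → A) → A) (c : ℤ) (a : ℕ → A) :
    gcomp n q (toCochain D) (X - c • Y) a
      = gcomp n q (toCochain D) X a - c • gcomp n q (toCochain D) Y a := by
  rw [gcomp_apply, gcomp_apply, gcomp_apply, Finset.smul_sum, ← Finset.sum_sub_distrib]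
  refine Finset.sum_congr rfl fun j hj => ?_
  have hj' : j < n := mem_range.mp hj
  rw [toCochain_insArg D hj' q (X - c • Y) X a, toCochain_insArg D hj' q Y X a,
    toCochain_insArg D hj' q X X a]
  have hXY : (X - c • Y) (fun l => a (j + l))
      = X (fun l => a (j + l)) - c • Y (fun l => a (j + l)) := rfl
  rw [hXY, map_sub, map_zsmul, smul_sub, smul_comm ((-1 : ℤ) ^ ((q + 1) * j)) c]

lemma gcomp_left_sub (q r : ℕ) (G H X : (ℕ → A) → A) (c : ℤ) (a : ℕ → A) :
    gcomp q r (G - c • H) X a = gcomp q r G X a - c • gcomp q r H X a := by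
  rw [gcomp_apply, gcomp_apply, gcomp_apply, Finset.smul_sum, ← Finset.sum_sub_distrib]
  refine Finset.sum_congr rfl fun j _ => ?_
  rw [Pi.sub_apply, Pi.smul_apply, smul_sub, smul_comm ((-1 : ℤ) ^ ((r + 1) * j)) c]

/-! ### The key combinatorial swap -/

lemma insArg_swap {m p u v : ℕ} (hu : u < v)
    (E : MultilinearMap k (fun _ : Fin m => A) A)
    (F : MultilinearMap k (fun _ : Fin p => A) A) (a : ℕ → A) :
    insArg u m (toCochain E) (insArg (v + m - 1) p (toCochain F) a)
      = insArg v p (toCochain F) (insArg u m (toCochain E) a) := by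
  funext w
  rcases lt_trichotomy w u with h1 | h1 | h1
  · rw [insArg_lt _ _ _ h1, insArg_lt _ _ _ (show w < v + m - 1 by omega),
      insArg_lt _ _ _ (show w < v by omega), insArg_lt _ _ _ h1]
  · subst h1
    rw [insArg_self, insArg_lt _ _ _ hu, insArg_self]
    apply toCochain_congr
    intro l hl
    rw [insArg_lt _ _ _ (show w + l < v + m - 1 by omega)]
  · rcases lt_trichotomy w v with h2 | h2 | h2
    · rw [insArg_gt _ _ _ h1, insArg_lt _ _ _ (show w + m - 1 < v + m - 1 by omega),
        insArg_lt _ _ _ h2, insArg_gt _ _ _ h1]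
    · subst h2
      rw [insArg_gt _ _ _ h1, insArg_self, insArg_self]
      apply toCochain_congr
      intro l _
      rw [insArg_gt _ _ _ (show u < w + l by omega)]
      exact congrArg a (by omega)
    · rw [insArg_gt _ _ _ h1, insArg_gt _ _ _ (show v + m - 1 < w + m - 1 by omega),
        insArg_gt _ _ _ h2, insArg_gt _ _ _ (show u < w + p - 1 by omega)]
      exact congrArg a (by omega)

/-! ### Nested form of `D ∘ (E ∘ F)` -/

lemma gcomp_nested (n m p : ℕ) (D : MultilinearMap k (fun _ : Fin n => A) A)
    (E : MultilinearMap k (fun _ : Fin m => A) A)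
    (F : MultilinearMap k (fun _ : Fin p => A) A) (a : ℕ → A) :
    gcomp n (m + p - 1) (toCochain D) (gcomp m p (toCochain E) (toCochain F)) a
      = ∑ i ∈ range n, ∑ t ∈ range m,
          (-1 : ℤ) ^ ((p + 1) * (i + t) + (m + 1) * i) •
            toCochain D (insArg i m (toCochain E) (insArg (i + t) p (toCochain F) a)) := by
  rw [gcomp_apply]
  refine Finset.sum_congr rfl fun i hi => ?_
  have hi' : i < n := mem_range.mp hi
  rw [toCochain_slot_sum D hi' (insArg i (m + p - 1) (gcomp m p (toCochain E) (toCochain F)) a)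
      (range m) (fun t => (-1 : ℤ) ^ ((p + 1) * t))
      (fun t => toCochain E (insArg t p (toCochain F) fun l => a (i + l)))
      (by rw [insArg_self]; exact gcomp_apply m p _ _ _)]
  rw [Finset.smul_sum]
  refine Finset.sum_congr rfl fun t ht => ?_
  have ht' : t < m := mem_range.mp ht
  rw [smul_smul, ← pow_add]
  have hfun : toCochain D
      (fun w => if w = i then toCochain E (insArg t p (toCochain F) fun l => a (i + l))
        else insArg i (m + p - 1) (gcomp m p (toCochain E) (toCochain F)) a w)
      = toCochain D (insArg i m (toCochain E) (insArg (i + t) p (toCochain F) a)) := by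
    apply toCochain_congr
    intro w _
    rcases lt_trichotomy w i with h | h | h
    · rw [if_neg (by omega), insArg_lt _ _ _ h, insArg_lt _ _ _ h,
        insArg_lt _ _ _ (show w < i + t by omega)]
    · subst h
      rw [if_pos rfl, insArg_self]
      congr 1
      funext l
      rcases lt_trichotomy l t with h2 | h2 | h2
      · rw [insArg_lt _ _ _ h2, insArg_lt _ _ _ (show w + l < w + t by omega)]
      · subst h2
        rw [insArg_self, insArg_self]
        congr 1
        funext r
        exact congrArg a (by omega)
      · rw [insArg_gt _ _ _ h2, insArg_gt _ _ _ (show w + t < w + l by omega)]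
        exact congrArg a (by omega)
    · rw [if_neg (by omega), insArg_gt _ _ _ h, insArg_gt _ _ _ h,
        insArg_gt _ _ _ (show i + t < w + m - 1 by omega)]
      exact congrArg a (by omega)
  rw [hfun]
  congr 1
  rw [show m + p - 1 + 1 = m + p from by omega,
    show (p + 1) * (i + t) + (m + 1) * i = ((m + p) * i + (p + 1) * t) + 2 * i from by ring,
    eps_two]

/-! ### Splitting `(D ∘ E) ∘ F` -/

lemma gcomp_gcomp_left (n m p : ℕ) (D E F : (ℕ → A) → A) (a : ℕ → A) :
    gcomp (n + m - 1) p (gcomp n m D E) F a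
      = (∑ i ∈ range n, ∑ t ∈ range m,
            (-1 : ℤ) ^ ((p + 1) * (i + t) + (m + 1) * i) •
              D (insArg i m E (insArg (i + t) p F a)))
        + (∑ q ∈ (range n ×ˢ range n).filter fun q => q.1 < q.2,
            (-1 : ℤ) ^ ((p + 1) * (q.2 + m - 1) + (m + 1) * q.1) •
              D (insArg q.1 m E (insArg (q.2 + m - 1) p F a)))
        + (∑ q ∈ (range n ×ˢ range n).filter fun q => q.1 < q.2,
            (-1 : ℤ) ^ ((p + 1) * q.1 + (m + 1) * q.2) •
              D (insArg q.2 m E (insArg q.1 p F a))) := by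
  have key : gcomp (n + m - 1) p (gcomp n m D E) F a
      = ∑ q ∈ (range (n + m - 1)) ×ˢ (range n),
          (-1 : ℤ) ^ ((p + 1) * q.1 + (m + 1) * q.2) •
            D (insArg q.2 m E (insArg q.1 p F a)) := by
    rw [gcomp_apply, Finset.sum_product]
    refine Finset.sum_congr rfl fun j _ => ?_
    rw [gcomp_apply, Finset.smul_sum]
    refine Finset.sum_congr rfl fun i _ => ?_
    rw [smul_smul, ← pow_add]
  rw [key, ← Finset.sum_filter_add_sum_filter_not ((range (n + m - 1)) ×ˢ (range n))
      (fun q => q.2 ≤ q.1)]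
  congr 1
  · rw [← Finset.sum_filter_add_sum_filter_not
        (((range (n + m - 1)) ×ˢ (range n)).filter fun q => q.2 ≤ q.1)
        (fun q => q.1 < q.2 + m), Finset.filter_filter, Finset.filter_filter]
    congr 1
    · rw [← Finset.sum_product']
      refine Finset.sum_nbij' (fun q => (q.2, q.1 - q.2)) (fun r => (r.1 + r.2, r.1))
        ?_ ?_ ?_ ?_ ?_
      · intro q hq
        simp only [Finset.mem_filter, Finset.mem_product, Finset.mem_range] at hq ⊢
        omega
      · intro r hr
        simp only [Finset.mem_filter, Finset.mem_product, Finset.mem_range] at hr ⊢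
        omega
      · intro q hq
        simp only [Finset.mem_filter, Finset.mem_product, Finset.mem_range] at hq
        have : q.2 + (q.1 - q.2) = q.1 := by omega
        exact Prod.ext this rfl
      · intro r hr
        simp only [Finset.mem_filter, Finset.mem_product, Finset.mem_range] at hr
        have : r.1 + r.2 - r.1 = r.2 := by omega
        exact Prod.ext rfl this
      · intro q hq
        simp only [Finset.mem_filter, Finset.mem_product, Finset.mem_range] at hq
        have h : q.2 + (q.1 - q.2) = q.1 := by omega
        rw [h]
    · refine Finset.sum_nbij' (fun q => (q.2, q.1 - m + 1)) (fun r => (r.2 + m - 1, r.1))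
        ?_ ?_ ?_ ?_ ?_
      · intro q hq
        simp only [Finset.mem_filter, Finset.mem_product, Finset.mem_range] at hq ⊢
        omega
      · intro r hr
        simp only [Finset.mem_filter, Finset.mem_product, Finset.mem_range] at hr ⊢
        omega
      · intro q hq
        simp only [Finset.mem_filter, Finset.mem_product, Finset.mem_range] at hq
        have : q.1 - m + 1 + m - 1 = q.1 := by omega
        exact Prod.ext this rfl
      · intro r hr
        simp only [Finset.mem_filter, Finset.mem_product, Finset.mem_range] at hr
        have : r.2 + m - 1 - m + 1 = r.2 := by omega
        exact Prod.ext rfl this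
      · intro q hq
        simp only [Finset.mem_filter, Finset.mem_product, Finset.mem_range] at hq
        have h : q.1 - m + 1 + m - 1 = q.1 := by omega
        rw [h]
  · have hset : ((range (n + m - 1)) ×ˢ (range n)).filter (fun q => ¬ q.2 ≤ q.1)
        = (range n ×ˢ range n).filter fun q => q.1 < q.2 := by
      ext q
      simp only [Finset.mem_filter, Finset.mem_product, Finset.mem_range, not_le]
      omega
    rw [hset]

/-! ### The graded pre-Lie (right-symmetry) identity -/

lemma pre_lie (n m p : ℕ) (D : MultilinearMap k (fun _ : Fin n => A) A)
    (E : MultilinearMap k (fun _ : Fin m => A) A)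
    (F : MultilinearMap k (fun _ : Fin p => A) A) (a : ℕ → A) :
    gcomp (n + m - 1) p (gcomp n m (toCochain D) (toCochain E)) (toCochain F) a
      - gcomp n (m + p - 1) (toCochain D) (gcomp m p (toCochain E) (toCochain F)) a
    = (-1 : ℤ) ^ ((m + 1) * (p + 1)) •
        (gcomp (n + p - 1) m (gcomp n p (toCochain D) (toCochain F)) (toCochain E) a
          - gcomp n (m + p - 1) (toCochain D) (gcomp p m (toCochain F) (toCochain E)) a) := by
  rw [gcomp_gcomp_left n m p (toCochain D) (toCochain E) (toCochain F) a,
    gcomp_gcomp_left n p m (toCochain D) (toCochain F) (toCochain E) a,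
    gcomp_nested n m p D E F a,
    show m + p - 1 = p + m - 1 from by omega,
    gcomp_nested n p m D F E a]
  have habc : ∀ x y z : A, x + y + z - x = y + z := fun x y z => by abel
  rw [habc, habc, smul_add]
  have h1 : (∑ q ∈ (range n ×ˢ range n).filter fun q => q.1 < q.2,
        (-1 : ℤ) ^ ((p + 1) * (q.2 + m - 1) + (m + 1) * q.1) •
          toCochain D (insArg q.1 m (toCochain E)
            (insArg (q.2 + m - 1) p (toCochain F) a)))
      = (-1 : ℤ) ^ ((m + 1) * (p + 1)) •
        ∑ q ∈ (range n ×ˢ range n).filter fun q => q.1 < q.2,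
          (-1 : ℤ) ^ ((m + 1) * q.1 + (p + 1) * q.2) •
            toCochain D (insArg q.2 p (toCochain F) (insArg q.1 m (toCochain E) a)) := by
    rw [Finset.smul_sum]
    refine Finset.sum_congr rfl fun q hq => ?_
    have huv : q.1 < q.2 := (Finset.mem_filter.mp hq).2
    rw [insArg_swap huv E F a, smul_smul, ← pow_add]
    congr 1
    obtain ⟨w, hw⟩ : ∃ w, q.2 = w + 1 := ⟨q.2 - 1, by omega⟩
    rw [hw, show w + 1 + m - 1 = w + m from by omega,
      show (m + 1) * (p + 1) + ((m + 1) * q.1 + (p + 1) * (w + 1))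
        = ((p + 1) * (w + m) + (m + 1) * q.1) + 2 * (p + 1) from by ring,
      eps_two]
  have h2 : (∑ q ∈ (range n ×ˢ range n).filter fun q => q.1 < q.2,
        (-1 : ℤ) ^ ((p + 1) * q.1 + (m + 1) * q.2) •
          toCochain D (insArg q.2 m (toCochain E) (insArg q.1 p (toCochain F) a)))
      = (-1 : ℤ) ^ ((m + 1) * (p + 1)) •
        ∑ q ∈ (range n ×ˢ range n).filter fun q => q.1 < q.2,
          (-1 : ℤ) ^ ((m + 1) * (q.2 + p - 1) + (p + 1) * q.1) •
            toCochain D (insArg q.1 p (toCochain F)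
              (insArg (q.2 + p - 1) m (toCochain E) a)) := by
    rw [Finset.smul_sum]
    refine Finset.sum_congr rfl fun q hq => ?_
    have huv : q.1 < q.2 := (Finset.mem_filter.mp hq).2
    rw [insArg_swap huv F E a, smul_smul, ← pow_add]
    congr 1
    obtain ⟨w, hw⟩ : ∃ w, q.2 = w + 1 := ⟨q.2 - 1, by omega⟩
    rw [hw, show w + 1 + p - 1 = w + p from by omega,
      show (m + 1) * (p + 1) + ((m + 1) * (w + p) + (p + 1) * q.1)
        = ((p + 1) * q.1 + (m + 1) * (w + 1)) + 2 * ((m + 1) * p) from by ring,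
      eps_two]
  rw [h1, h2]
  exact add_comm _ _

/-- The Gerstenhaber bracket satisfies the graded Jacobi identity:
`[D,[E,F]_G]_G = [[D,E]_G,F]_G + (−1)^{(n−1)(m−1)} [E,[D,F]_G]_G`
for an `n`-cochain `D`, an `m`-cochain `E` and a `p`-cochain `F` (so `[E,F]_G` is an
`(m+p−1)`-cochain, `[D,E]_G` an `(n+m−1)`-cochain and `[D,F]_G` an `(n+p−1)`-cochain). -/
theorem gerstenhaber_bracket_graded_jacobi (n m p : ℕ)
    (D : MultilinearMap k (fun _ : Fin n => A) A)
    (E : MultilinearMap k (fun _ : Fin m => A) A)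
    (F : MultilinearMap k (fun _ : Fin p => A) A) :
    gbracket n (m + p - 1) (toCochain D) (gbracket m p (toCochain E) (toCochain F))
      = gbracket (n + m - 1) p (gbracket n m (toCochain D) (toCochain E)) (toCochain F)
        + ((-1 : ℤ) ^ ((n + 1) * (m + 1))) •
            gbracket m (n + p - 1) (toCochain E) (gbracket n p (toCochain D) (toCochain F)) := by
  by_cases hmp : m = 0 ∧ p = 0
  · -- m = 0 and p = 0
    obtain ⟨rfl, rfl⟩ := hmp
    rcases Nat.eq_zero_or_pos n with rfl | hn
    · funext a
      simp only [gbracket, Pi.add_apply, Pi.sub_apply, Pi.smul_apply]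
      simp [gcomp_zero_fst]
    · funext a
      simp only [Nat.add_zero, Nat.zero_sub, gbracket, Pi.add_apply, Pi.sub_apply,
        Pi.smul_apply]
      have hz1 : ∀ b : ℕ → A, gcomp 0 0 (toCochain E) (toCochain F) b = 0 :=
        fun b => gcomp_zero_fst _ _ _ b
      have hz2 : ∀ b : ℕ → A, gcomp 0 0 (toCochain F) (toCochain E) b = 0 :=
        fun b => gcomp_zero_fst _ _ _ b
      have hzB : ∀ b : ℕ → A, (gcomp 0 0 (toCochain E) (toCochain F)
          - ((-1 : ℤ) ^ ((0 + 1) * (0 + 1))) • gcomp 0 0 (toCochain F) (toCochain E)) b = 0 :=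
        fun b => by simp [Pi.sub_apply, Pi.smul_apply, hz1 b, hz2 b]
      rw [gcomp_right_zero n 0 D hzB a,
        gcomp_left_sub (n - 1) 0 _ _ (toCochain F) _ a,
        gcomp_left_zero (n - 1) 0 (toCochain F) (fun b => gcomp_zero_fst _ _ _ b) a,
        gcomp_left_sub (n - 1) 0 _ _ (toCochain E) _ a,
        gcomp_left_zero (n - 1) 0 (toCochain E) (fun b => gcomp_zero_fst _ _ _ b) a]
      simp only [gcomp_zero_fst]
      have hpre := pre_lie n 0 0 D E F a
      simp only [Nat.add_zero, Nat.zero_sub] at hpre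
      rw [gcomp_right_zero n 0 D hz1 a, gcomp_right_zero n 0 D hz2 a] at hpre
      rw [sub_eq_iff_eq_add.mp hpre]
      have hn' : n - 1 + 1 = n := by omega
      rw [hn']
      rw [show ((0 : ℕ) + 1) * ((0 : ℕ) + 1) = 1 from rfl, pow_one,
        show (n + 1) * (0 + 1) = n + 1 from by ring,
        show n * ((0 : ℕ) + 1) = n from by ring,
        show ((0 : ℕ) + 1) * n = n from by ring]
      rw [show ((-1 : ℤ)) ^ (n + 1) = -((-1 : ℤ) ^ n) from by rw [pow_succ]; ring]
      rcases neg_one_pow_cases n with e | e <;> rw [e] <;> module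
  · by_cases hnm : n = 0 ∧ m = 0
    · -- n = 0 and m = 0 (and p ≠ 0)
      obtain ⟨rfl, rfl⟩ := hnm
      have hp : p ≠ 0 := fun h => hmp ⟨rfl, h⟩
      funext a
      simp only [Nat.zero_add, Nat.zero_sub, gbracket, Pi.add_apply, Pi.sub_apply,
        Pi.smul_apply, one_mul]
      have hzB' : ∀ b : ℕ → A, (gcomp 0 0 (toCochain D) (toCochain E)
          - ((-1 : ℤ) ^ ((0 + 1) * (0 + 1))) • gcomp 0 0 (toCochain E) (toCochain D)) b = 0 :=
        fun b => by simp [Pi.sub_apply, Pi.smul_apply, gcomp_zero_fst]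
      rw [gcomp_left_sub (p - 1) 0 _ _ (toCochain D) _ a,
        gcomp_left_zero (p - 1) 0 (toCochain D) (fun b => gcomp_zero_fst _ _ _ b) a,
        gcomp_right_zero p 0 F hzB' a,
        gcomp_left_sub (p - 1) 0 _ _ (toCochain E) _ a,
        gcomp_left_zero (p - 1) 0 (toCochain E) (fun b => gcomp_zero_fst _ _ _ b) a]
      simp only [gcomp_zero_fst]
      have hpre := pre_lie p 0 0 F E D a
      simp only [Nat.add_zero, Nat.zero_sub] at hpre
      rw [gcomp_right_zero p 0 F (fun b => gcomp_zero_fst 0 (toCochain E) (toCochain D) b) a,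
        gcomp_right_zero p 0 F (fun b => gcomp_zero_fst 0 (toCochain D) (toCochain E) b) a]
        at hpre
      rw [sub_eq_iff_eq_add.mp hpre]
      have hp' : p - 1 + 1 = p := by omega
      rw [hp']
      rw [show ((0 : ℕ) + 1) * ((0 : ℕ) + 1) = 1 from rfl, pow_one]
      rw [show ((-1 : ℤ)) ^ (p + 1) = -((-1 : ℤ) ^ p) from by rw [pow_succ]; ring]
      rcases neg_one_pow_cases p with e | e <;> rw [e] <;> module
    · by_cases hnp : n = 0 ∧ p = 0
      · -- n = 0 and p = 0 (and m ≠ 0)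
        obtain ⟨rfl, rfl⟩ := hnp
        have hm : m ≠ 0 := fun h => hmp ⟨h, rfl⟩
        funext a
        simp only [Nat.add_zero, Nat.zero_add, Nat.zero_sub, gbracket, Pi.add_apply,
          Pi.sub_apply, Pi.smul_apply, one_mul, mul_one]
        have hzB'' : ∀ b : ℕ → A, (gcomp 0 0 (toCochain D) (toCochain F)
            - ((-1 : ℤ) ^ ((0 + 1) * (0 + 1))) • gcomp 0 0 (toCochain F) (toCochain D)) b = 0 :=
          fun b => by simp [Pi.sub_apply, Pi.smul_apply, gcomp_zero_fst]
        rw [gcomp_left_sub (m - 1) 0 _ _ (toCochain D) _ a,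
          gcomp_left_zero (m - 1) 0 (toCochain D) (fun b => gcomp_zero_fst _ _ _ b) a,
          gcomp_left_sub (m - 1) 0 _ _ (toCochain F) _ a,
          gcomp_left_zero (m - 1) 0 (toCochain F) (fun b => gcomp_zero_fst _ _ _ b) a,
          gcomp_right_zero m 0 E hzB'' a]
        simp only [gcomp_zero_fst]
        have hpre := pre_lie m 0 0 E F D a
        simp only [Nat.add_zero, Nat.zero_sub] at hpre
        rw [gcomp_right_zero m 0 E (fun b => gcomp_zero_fst 0 (toCochain F) (toCochain D) b) a,
          gcomp_right_zero m 0 E (fun b => gcomp_zero_fst 0 (toCochain D) (toCochain F) b) a]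
          at hpre
        rw [sub_eq_iff_eq_add.mp hpre]
        have hm' : m - 1 + 1 = m := by omega
        rw [hm']
        rw [show ((0 : ℕ) + 1) * ((0 : ℕ) + 1) = 1 from rfl, pow_one]
        rw [show ((-1 : ℤ)) ^ (m + 1) = -((-1 : ℤ) ^ m) from by rw [pow_succ]; ring]
        rcases neg_one_pow_cases m with e | e <;> rw [e] <;> module
      · -- generic case : each pairwise sum of degrees is positive
        have hmp1 : 1 ≤ m + p := by omega
        have hnm1 : 1 ≤ n + m := by omega
        have hnp1 : 1 ≤ n + p := by omega
        funext a
        simp only [gbracket, Pi.add_apply, Pi.sub_apply, Pi.smul_apply]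
        rw [gcomp_right_sub n (m + p - 1) D _ _ _ a,
          gcomp_left_sub (m + p - 1) n _ _ (toCochain D) _ a,
          gcomp_left_sub (n + m - 1) p _ _ (toCochain F) _ a,
          gcomp_right_sub p (n + m - 1) F _ _ _ a,
          gcomp_right_sub m (n + p - 1) E _ _ _ a,
          gcomp_left_sub (n + p - 1) m _ _ (toCochain E) _ a]
        have h1 := pre_lie n m p D E F a
        have h2 := pre_lie m n p E D F a
        have h3 := pre_lie p n m F D E a
        simp only [show m + n - 1 = n + m - 1 from by omega] at h2
        simp only [show p + n - 1 = n + p - 1 from by omega,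
          show p + m - 1 = m + p - 1 from by omega] at h3
        have hS1 : (-1 : ℤ) ^ ((n + 1) * (m + p - 1 + 1))
            = (-1 : ℤ) ^ ((n + 1) * (m + 1)) * (-1 : ℤ) ^ ((n + 1) * (p + 1)) := by
          rw [← pow_add, show (n + 1) * (m + 1) + (n + 1) * (p + 1)
            = (n + 1) * (m + p - 1 + 1) + 2 * (n + 1) from by
              rw [show m + p - 1 + 1 = m + p from by omega]; ring, eps_two]
        have hS2 : (-1 : ℤ) ^ ((n + m - 1 + 1) * (p + 1))
            = (-1 : ℤ) ^ ((n + 1) * (p + 1)) * (-1 : ℤ) ^ ((m + 1) * (p + 1)) := by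
          rw [← pow_add, show (n + 1) * (p + 1) + (m + 1) * (p + 1)
            = (n + m - 1 + 1) * (p + 1) + 2 * (p + 1) from by
              rw [show n + m - 1 + 1 = n + m from by omega]; ring, eps_two]
        have hS3 : (-1 : ℤ) ^ ((m + 1) * (n + p - 1 + 1))
            = (-1 : ℤ) ^ ((n + 1) * (m + 1)) * (-1 : ℤ) ^ ((m + 1) * (p + 1)) := by
          rw [← pow_add, show (n + 1) * (m + 1) + (m + 1) * (p + 1)
            = (m + 1) * (n + p - 1 + 1) + 2 * (m + 1) from by
              rw [show n + p - 1 + 1 = n + p from by omega]; ring, eps_two]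
        rw [hS1, hS2, hS3]
        rcases neg_one_pow_cases ((n + 1) * (m + 1)) with e1 | e1 <;>
          rcases neg_one_pow_cases ((n + 1) * (p + 1)) with e2 | e2 <;>
            rcases neg_one_pow_cases ((m + 1) * (p + 1)) with e3 | e3 <;>
              (rw [e3] at h1; rw [e2] at h2; rw [e1] at h3; rw [e1, e2, e3];
               rw [sub_eq_iff_eq_add.mp h1, sub_eq_iff_eq_add.mp h2,
                 sub_eq_iff_eq_add.mp h3];
               module)
end
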